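/- Suppose X is nonempty and connected and every panel P_i is nonempty. Then every connected component C of M(X, λ) is invariant under the restriction of the natural action to the subgroup L_λ, and the orbit space C/L_λ of this restricted action is homeomorphic to X/≈. If moreover the involutive panel structure is perfect, then the L_λ-action on each connected component C is free. -/

import Mathlib

open Set Relation

/-- An involutive panel structure on a topological space `X` with `k` panels. -/
structure PanelStructure (X : Type*) [TopologicalSpace X] (k : ℕ) where
  P : Fin k → Set X
  isClosed : ∀ i, IsClosed (P i)
  τ : Fin k → X → X
  continuousOn : ∀ i, ContinuousOn (τ i) (P i)
  mapsTo : ∀ i, Set.MapsTo (τ i) (P i) (P i)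
  invol : ∀ i, ∀ x ∈ P i, τ i (τ i x) = x
  interMapsTo : ∀ i j, Set.MapsTo (τ i) (P i ∩ P j) (P i ∩ P j)
  comm : ∀ i j, ∀ x ∈ P i ∩ P j, τ i (τ j x) = τ j (τ i x)

/-- The additive group `(ℤ/2)^m`, with the discrete topology. -/
abbrev Z2 (m : ℕ) : Type := Fin m → ZMod 2

instance (m : ℕ) : TopologicalSpace (Z2 m) := ⊥
instance (m : ℕ) : DiscreteTopology (Z2 m) := ⟨rfl⟩

variable {X : Type*} [TopologicalSpace X] {k m : ℕ}

/-- The basic gluing relation `(x, g) ∼ (τᵢ x, g + λ i)` for `x ∈ Pᵢ`. -/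
def glueRel (S : PanelStructure X k) {G : Type*} [AddGroup G] (lam : Fin k → G)
    (p q : X × G) : Prop :=
  ∃ i, p.1 ∈ S.P i ∧ q.1 = S.τ i p.1 ∧ q.2 = p.2 + lam i

/-- The equivalence relation generated by the gluing relation. -/
def glueSetoid (S : PanelStructure X k) {G : Type*} [AddGroup G] (lam : Fin k → G) :
    Setoid (X × G) :=
  EqvGen.setoid (glueRel S lam)

/-- The glue-back construction `M(X, λ)`, as a quotient of `X × G`
(with `G` carrying its own topology, discrete in the case `G = Z2 m`). -/
abbrev GlueBack (S : PanelStructure X k) {G : Type*} [AddGroup G] (lam : Fin k → G) :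
    Type _ :=
  Quotient (glueSetoid S lam)

/-- The class `[(x, g)]` in the glue-back construction. -/
abbrev glueMk (S : PanelStructure X k) {G : Type*} [AddGroup G] (lam : Fin k → G)
    (x : X) (g : G) : GlueBack S lam :=
  Quotient.mk (glueSetoid S lam) (x, g)

theorem eqvGen_map_of_map {α : Type*} {r : α → α → Prop} (f : α → α)
    (hf : ∀ a b, r a b → r (f a) (f b)) :
    ∀ {a b : α}, EqvGen r a b → EqvGen r (f a) (f b) := by
  intro a b h
  induction h with
  | rel a b h => exact EqvGen.rel _ _ (hf _ _ h)
  | refl a => exact EqvGen.refl _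
  | symm a b _ ih => exact EqvGen.symm _ _ ih
  | trans a b c _ _ ih₁ ih₂ => exact EqvGen.trans _ _ _ ih₁ ih₂

theorem glueRel_add (S : PanelStructure X k) {G : Type*} [AddGroup G] (lam : Fin k → G)
    (g : G) (a b : X × G) (h : glueRel S lam a b) :
    glueRel S lam (a.1, g + a.2) (b.1, g + b.2) := by
  obtain ⟨i, h₁, h₂, h₃⟩ := h
  exact ⟨i, h₁, h₂, by rw [h₃, add_assoc]⟩

/-- The natural action of `G` on the glue-back construction:
`g · [(x, g₀)] = [(x, g + g₀)]`. -/
def glueAct (S : PanelStructure X k) {G : Type*} [AddGroup G] (lam : Fin k → G) (g : G) :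
    GlueBack S lam → GlueBack S lam :=
  Quotient.map (fun p => (p.1, g + p.2))
    (fun a b (hab : EqvGen (glueRel S lam) a b) =>
      show EqvGen (glueRel S lam) _ _ from
        eqvGen_map_of_map (fun p => (p.1, g + p.2)) (glueRel_add S lam g) hab)

theorem glueAct_mk (S : PanelStructure X k) {G : Type*} [AddGroup G] (lam : Fin k → G)
    (g : G) (x : X) (g₀ : G) :
    glueAct S lam g (glueMk S lam x g₀) = glueMk S lam x (g + g₀) := rfl

theorem glueAct_zero (S : PanelStructure X k) {G : Type*} [AddGroup G] (lam : Fin k → G)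
    (p : GlueBack S lam) : glueAct S lam 0 p = p := by
  induction p using Quotient.ind with
  | _ a =>
    show Quotient.mk _ (a.1, 0 + a.2) = Quotient.mk _ a
    rw [zero_add]

theorem glueAct_add (S : PanelStructure X k) {G : Type*} [AddGroup G] (lam : Fin k → G)
    (g h : G) (p : GlueBack S lam) :
    glueAct S lam (g + h) p = glueAct S lam g (glueAct S lam h p) := by
  induction p using Quotient.ind with
  | _ a =>
    show Quotient.mk _ (a.1, (g + h) + a.2) = Quotient.mk _ (a.1, g + (h + a.2))
    rw [add_assoc]

/-- Iterated application of the involutions: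
`τ_{i_s}^{ε_s} ∘ ⋯ ∘ τ_{i_1}^{ε_1}` with the indices taken in increasing order. -/
def applyPanels (S : PanelStructure X k) (ε : Fin k → Bool) (x : X) : X :=
  (List.finRange k).foldl (fun y i => if ε i then S.τ i y else y) x

/-- The relation `x ≈ τᵢ(x)` on `X`. -/
def panelRel (S : PanelStructure X k) (x y : X) : Prop :=
  ∃ i, x ∈ S.P i ∧ y = S.τ i x

/-- The quotient `X/≈` of `X` by the equivalence relation generated by `x ≈ τᵢ(x)`. -/
abbrev PanelQuot (S : PanelStructure X k) : Type _ :=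
  Quotient (EqvGen.setoid (panelRel S))

/-- An involutive panel structure is *perfect* if every point lying on exactly `s`
panels has exactly `2^s` duplicate points. -/
def IsPerfect (S : PanelStructure X k) : Prop :=
  ∀ x : X,
    {y : X | ∃ ε : Fin k → Bool, (∀ i, ε i = true → x ∈ S.P i) ∧
        y = applyPanels S ε x}.ncard
      = 2 ^ ({i : Fin k | x ∈ S.P i}.ncard)

/-- The orbit equivalence relation of the restriction of the natural action to the
subgroup `L_λ` generated by the colors, on the connected component of `p`. -/
def compOrbitSetoid (S : PanelStructure X k) (lam : Fin k → Z2 m) (p : GlueBack S lam) :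
    Setoid (connectedComponent p) where
  r q q' := ∃ g ∈ Submodule.span (ZMod 2) (Set.range lam),
    glueAct S lam g (q : GlueBack S lam) = (q' : GlueBack S lam)
  iseqv := by
    refine ⟨fun q => ⟨0, Submodule.zero_mem _, glueAct_zero S lam _⟩, ?_, ?_⟩
    · rintro q q' ⟨g, hg, hq⟩
      refine ⟨g, hg, ?_⟩
      rw [← hq, ← glueAct_add]
      have h2 : g + g = 0 := by
        funext i
        exact (by decide : ∀ a : ZMod 2, a + a = 0) (g i)
      rw [h2, glueAct_zero]
    · rintro q q' q'' ⟨g, hg, hq⟩ ⟨g', hg', hq'⟩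
      exact ⟨g' + g, Submodule.add_mem _ hg' hg, by rw [glueAct_add, hq, hq']⟩

/-!
The space `M(X, λ)` is the union of the continuous images of the connected sheets `X × {g}`.
Gluing along a nonempty panel `Pᵢ` joins the sheets `g` and `g + λ(i)`, so sheets in the same
coset of `L_λ` lie in one component; conversely the coset of `g` modulo `L_λ` is locally
constant on `M(X, λ)`, so a component `C` is exactly the union of the sheets of one coset. Any
single sheet therefore maps onto `C`, and two of its points become `L_λ`-equivalent exactly when
they are `≈`-equivalent, which gives `C/L_λ ≃ X/≈`.

For freeness, every identification `(x, g) ∼ (y, h)` is realized by a single duplicate move: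
`y = τ^ε x` with `ε` supported on `I(x)` and `h = g + ∑ εᵢ λ(i)`. Perfection says exactly that
`ε ↦ τ^ε x` is injective on such `ε`, so `g · q = q` forces `ε = 0`, hence `g = 0`.
-/

theorem Z2.add_self (g : Z2 m) : g + g = 0 :=
  funext fun i => (by decide : ∀ a : ZMod 2, a + a = 0) (g i)

theorem Relation.EqvGen.apply_eq {α β : Type*} {r : α → α → Prop} {f : α → β}
    (hf : ∀ a b, r a b → f a = f b) {a b : α} (h : EqvGen r a b) : f a = f b :=
  (Setoid.ker f).iseqv.eqvGen_iff.mp (EqvGen.mono hf a b h)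

namespace PanelStructure

variable (S : PanelStructure X k)

def SupportedAt (ε : Fin k → Bool) (x : X) : Prop :=
  ∀ i, ε i = true → x ∈ S.P i

def foldPanels (ε : Fin k → Bool) (L : List (Fin k)) (x : X) : X :=
  L.foldl (fun y i => if ε i then S.τ i y else y) x

variable {S} {ε ε' : Fin k → Bool} {i j : Fin k} {x : X}

theorem τ_mem_iff (hx : x ∈ S.P i) : S.τ i x ∈ S.P j ↔ x ∈ S.P j :=
  ⟨fun h => S.invol i x hx ▸ (S.interMapsTo i j ⟨S.mapsTo i hx, h⟩).2,
    fun h => (S.interMapsTo i j ⟨hx, h⟩).2⟩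

theorem SupportedAt.τ (hε : S.SupportedAt ε x) (hx : x ∈ S.P i) :
    S.SupportedAt ε (S.τ i x) :=
  fun l hl => (τ_mem_iff hx).2 (hε l hl)

theorem foldPanels_cons (L : List (Fin k)) (x : X) :
    S.foldPanels ε (i :: L) x = S.foldPanels ε L (if ε i then S.τ i x else x) := rfl

theorem mem_foldPanels_iff (L : List (Fin k)) (hε : S.SupportedAt ε x) :
    S.foldPanels ε L x ∈ S.P j ↔ x ∈ S.P j := by
  induction L generalizing x with
  | nil => rfl
  | cons i L ih =>
    rw [foldPanels_cons]
    cases hi : ε i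
    · exact ih hε
    · have hx := hε i hi
      exact (ih (hε.τ hx)).trans (τ_mem_iff hx)

theorem τ_foldPanels (L : List (Fin k)) (hε : S.SupportedAt ε x) (hj : x ∈ S.P j) :
    S.τ j (S.foldPanels ε L x) = S.foldPanels ε L (S.τ j x) := by
  induction L generalizing x with
  | nil => rfl
  | cons i L ih =>
    rw [foldPanels_cons, foldPanels_cons]
    cases hi : ε i
    · exact ih hε hj
    · have hx := hε i hi
      rw [if_pos rfl, if_pos rfl, ih (hε.τ hx) ((τ_mem_iff hx).2 hj), S.comm j i x ⟨hj, hx⟩]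

theorem foldPanels_foldPanels (L : List (Fin k)) (hε : S.SupportedAt ε x)
    (hε' : S.SupportedAt ε' x) :
    S.foldPanels ε' L (S.foldPanels ε L x) = S.foldPanels (fun i => xor (ε i) (ε' i)) L x := by
  induction L generalizing x with
  | nil => rfl
  | cons i L ih =>
    simp only [foldPanels_cons]
    cases hi : ε i <;> cases hi' : ε' i <;>
      simp only [Bool.false_eq_true, Bool.xor_false, Bool.false_xor, Bool.xor_self, if_false,
        if_true]
    · exact ih hε hε'
    · have hx := hε' i hi'
      rw [τ_foldPanels L hε hx]
      exact ih (hε.τ hx) (hε'.τ hx)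
    · have hx := hε i hi
      exact ih (hε.τ hx) (hε'.τ hx)
    · have hx := hε i hi
      rw [τ_foldPanels L (hε.τ hx) (S.mapsTo i hx), S.invol i x hx]
      exact ih hε hε'

theorem foldPanels_of_forall_false {L : List (Fin k)} (h : ∀ l ∈ L, ε l = false) (x : X) :
    S.foldPanels ε L x = x := by
  induction L generalizing x with
  | nil => rfl
  | cons i L ih =>
    rw [foldPanels_cons, h i List.mem_cons_self, if_neg Bool.false_ne_true]
    exact ih (fun l hl => h l (List.mem_cons_of_mem i hl)) x

theorem foldPanels_single {L : List (Fin k)} (hL : L.Nodup) (hj : j ∈ L) (x : X) :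
    S.foldPanels (fun i => decide (i = j)) L x = S.τ j x := by
  induction L generalizing x with
  | nil => simp at hj
  | cons i L ih =>
    rw [List.nodup_cons] at hL
    rw [foldPanels_cons]
    by_cases hij : i = j
    · subst hij
      rw [if_pos (decide_eq_true rfl)]
      exact foldPanels_of_forall_false
        (fun l hl => decide_eq_false (ne_of_mem_of_not_mem hl hL.1)) _
    · rw [if_neg (by simpa using hij)]
      exact ih hL.2 ((List.mem_cons.mp hj).resolve_left (Ne.symm hij)) x

theorem mem_applyPanels_iff (hε : S.SupportedAt ε x) :
    applyPanels S ε x ∈ S.P j ↔ x ∈ S.P j :=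
  mem_foldPanels_iff _ hε

theorem supportedAt_applyPanels_iff (hε : S.SupportedAt ε x) :
    S.SupportedAt ε' (applyPanels S ε x) ↔ S.SupportedAt ε' x :=
  forall_congr' fun _ => imp_congr_right fun _ => mem_applyPanels_iff hε

theorem applyPanels_applyPanels (hε : S.SupportedAt ε x) (hε' : S.SupportedAt ε' x) :
    applyPanels S ε' (applyPanels S ε x) = applyPanels S (fun i => xor (ε i) (ε' i)) x :=
  foldPanels_foldPanels _ hε hε'

theorem applyPanels_false (x : X) : applyPanels S (fun _ => false) x = x :=
  foldPanels_of_forall_false (fun _ _ => rfl) x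

theorem applyPanels_single (x : X) : applyPanels S (fun i => decide (i = j)) x = S.τ j x :=
  foldPanels_single (List.nodup_finRange k) (List.mem_finRange j) x

theorem supportedAt_false (x : X) : S.SupportedAt (fun _ => false) x :=
  fun _ h => absurd h Bool.false_ne_true

theorem ncard_setOf_supportedAt (x : X) :
    {ε | S.SupportedAt ε x}.ncard = 2 ^ {i | x ∈ S.P i}.ncard := by
  classical
  set I := Finset.univ.filter fun i => x ∈ S.P i
  have hI : {i | x ∈ S.P i} = I := by simp [I]
  have himage : {ε | S.SupportedAt ε x} = (fun (t : Finset (Fin k)) i => decide (i ∈ t)) ''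
      (I.powerset : Set (Finset (Fin k))) := by
    ext ε
    constructor
    · intro hε
      refine ⟨Finset.univ.filter fun i => ε i = true, ?_, funext fun i => ?_⟩
      · simpa [I, Finset.subset_iff, SupportedAt] using hε
      · cases h : ε i <;> simp [h]
    · rintro ⟨t, ht, rfl⟩ i hi
      simpa [I] using Finset.mem_powerset.mp ht (of_decide_eq_true hi)
  rw [himage, Set.ncard_image_of_injective _ fun t t' h => ?_, Set.ncard_coe_finset,
    Finset.card_powerset, hI, Set.ncard_coe_finset]
  ext i
  simpa using congrFun h i

end PanelStructure

open PanelStructure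

theorem IsPerfect.injOn_applyPanels {S : PanelStructure X k} (hS : IsPerfect S) (x : X) :
    Set.InjOn (applyPanels S · x) {ε | S.SupportedAt ε x} := by
  refine Set.injOn_of_ncard_image_eq ?_
  rw [ncard_setOf_supportedAt, ← hS x]
  congr 1
  ext y
  exact ⟨fun ⟨ε, hε, e⟩ => ⟨ε, hε, e.symm⟩, fun ⟨ε, hε, e⟩ => ⟨ε, hε, e.symm⟩⟩

section Coloring

variable {G : Type*} [AddCommMonoid G]

def colorSum (lam : Fin k → G) (ε : Fin k → Bool) : G :=
  ∑ i, if ε i then lam i else 0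

theorem colorSum_false (lam : Fin k → G) : colorSum lam (fun _ => false) = 0 := by
  simp [colorSum]

theorem colorSum_single (lam : Fin k → G) (j : Fin k) :
    colorSum lam (fun i => decide (i = j)) = lam j := by
  simp [colorSum]

theorem colorSum_xor (lam : Fin k → Z2 m) (ε ε' : Fin k → Bool) :
    colorSum lam (fun i => xor (ε i) (ε' i)) = colorSum lam ε + colorSum lam ε' := by
  rw [colorSum, colorSum, colorSum, ← Finset.sum_add_distrib]
  refine Finset.sum_congr rfl fun i _ => ?_
  cases ε i <;> cases ε' i <;> simp [Z2.add_self]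

end Coloring

section Glue

variable (S : PanelStructure X k) (lam : Fin k → Z2 m)

def dupRel (a b : X × Z2 m) : Prop :=
  ∃ ε, S.SupportedAt ε a.1 ∧ b.1 = applyPanels S ε a.1 ∧ b.2 = a.2 + colorSum lam ε

theorem dupRel_equivalence : Equivalence (dupRel S lam) where
  refl a :=
    ⟨_, supportedAt_false a.1, (applyPanels_false a.1).symm, by rw [colorSum_false, add_zero]⟩
  symm := by
    rintro ⟨x, g⟩ ⟨y, h⟩ ⟨ε, hε, hy, hh⟩
    dsimp only at hε hy hh
    subst hy hh
    refine ⟨ε, (supportedAt_applyPanels_iff hε).2 hε, ?_, by rw [add_assoc, Z2.add_self, add_zero]⟩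
    rw [applyPanels_applyPanels hε hε]
    simp only [Bool.xor_self, applyPanels_false]
  trans := by
    rintro ⟨x, g⟩ ⟨y, h⟩ ⟨z, f⟩ ⟨ε, hε, hy, hh⟩ ⟨ε', hε', hz, hf⟩
    dsimp only at hε hy hh hε' hz hf
    subst hy hh hz hf
    rw [supportedAt_applyPanels_iff hε] at hε'
    refine ⟨_, fun i hi => ?_, applyPanels_applyPanels hε hε', by rw [colorSum_xor, add_assoc]⟩
    cases h : ε i
    · exact hε' i (by simpa [h] using hi)
    · exact hε i h

theorem glueRel_le_dupRel : glueRel S lam ≤ dupRel S lam := by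
  rintro a b ⟨i, hi, h₁, h₂⟩
  refine ⟨fun l => decide (l = i), fun l hl => of_decide_eq_true hl ▸ hi, ?_, ?_⟩
  · rw [applyPanels_single, h₁]
  · rw [colorSum_single, h₂]

variable {S lam} in
theorem dupRel_of_glueMk_eq {x y : X} {g h : Z2 m} (e : glueMk S lam x g = glueMk S lam y h) :
    dupRel S lam (x, g) (y, h) :=
  (dupRel_equivalence S lam).eqvGen_iff.mp
    (EqvGen.mono (glueRel_le_dupRel S lam) _ _ (Quotient.exact e))

theorem eq_zero_of_glueAct_eq_self (hS : IsPerfect S) {g : Z2 m} {q : GlueBack S lam}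
    (hq : glueAct S lam g q = q) : g = 0 := by
  induction q using Quotient.inductionOn with
  | _ a =>
    obtain ⟨ε, hε, hx, hc⟩ := dupRel_of_glueMk_eq hq
    have hε0 : ε = fun _ => false :=
      hS.injOn_applyPanels a.1 hε (supportedAt_false a.1) (hx.symm.trans (applyPanels_false _).symm)
    rw [hε0, colorSum_false, add_zero] at hc
    simpa using hc

theorem glueAct_color_glueMk {i : Fin k} {x : X} (hx : x ∈ S.P i) (h : Z2 m) :
    glueAct S lam (lam i) (glueMk S lam x h) = glueMk S lam (S.τ i x) h := by
  rw [glueAct_mk, add_comm]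
  conv_lhs => rw [← S.invol i x hx]
  exact Quotient.sound (EqvGen.symm _ _ (EqvGen.rel _ _ ⟨i, S.mapsTo i hx, rfl, rfl⟩))

theorem continuous_glueMk (h : Z2 m) : Continuous (glueMk S lam · h) :=
  continuous_quotient_mk'.comp (continuous_id.prodMk continuous_const)

theorem glueMk_mem_connectedComponent [PreconnectedSpace X] (x y : X) (h : Z2 m) :
    glueMk S lam x h ∈ connectedComponent (glueMk S lam y h) :=
  (isPreconnected_range (continuous_glueMk S lam h)).subset_connectedComponent ⟨y, rfl⟩ ⟨x, rfl⟩

theorem glueAct_mem_connectedComponent [PreconnectedSpace X] (hP : ∀ i, (S.P i).Nonempty)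
    {g : Z2 m} (hg : g ∈ Submodule.span (ZMod 2) (Set.range lam)) (q : GlueBack S lam) :
    glueAct S lam g q ∈ connectedComponent q := by
  induction hg using Submodule.span_induction generalizing q with
  | mem v hv =>
    obtain ⟨i, rfl⟩ := hv
    induction q using Quotient.inductionOn with
    | _ a =>
      obtain ⟨y, hy⟩ := hP i
      have hsheet := glueMk_mem_connectedComponent S lam a.1 y (lam i + a.2)
      rwa [← glueAct_mk, glueAct_color_glueMk S lam hy,
        ← connectedComponent_eq (glueMk_mem_connectedComponent S lam _ a.1 a.2)] at hsheet
  | zero => rw [glueAct_zero]; exact mem_connectedComponent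
  | add g g' _ _ ih ih' =>
    rw [glueAct_add, connectedComponent_eq (ih' q)]
    exact ih _
  | smul c g _ ih =>
    rcases (by decide : ∀ c : ZMod 2, c = 0 ∨ c = 1) c with rfl | rfl
    · rw [zero_smul, glueAct_zero]; exact mem_connectedComponent
    · rw [one_smul]; exact ih q

def colorClass : GlueBack S lam → Z2 m ⧸ Submodule.span (ZMod 2) (Set.range lam) :=
  Quotient.lift (fun a => Submodule.Quotient.mk a.2) fun _ _ hab =>
    EqvGen.apply_eq (r := glueRel S lam) (f := fun a => Submodule.Quotient.mk a.2)
      (fun _ _ ⟨i, _, _, h⟩ => (Submodule.Quotient.eq _).2 <| by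
        rw [h, sub_add_cancel_left]
        exact neg_mem (Submodule.subset_span ⟨i, rfl⟩)) hab

theorem isLocallyConstant_colorClass : IsLocallyConstant (colorClass S lam) := fun s =>
  (isQuotientMap_quotient_mk' (s := glueSetoid S lam)).isOpen_preimage.1
    ((isOpen_discrete (Submodule.Quotient.mk ⁻¹' s)).preimage continuous_snd)

theorem sub_mem_span_of_mem_connectedComponent {x y : X} {g h : Z2 m}
    (hc : glueMk S lam x g ∈ connectedComponent (glueMk S lam y h)) :
    g - h ∈ Submodule.span (ZMod 2) (Set.range lam) :=
  (Submodule.Quotient.eq _).1 <| (isLocallyConstant_colorClass S lam).apply_eq_of_isPreconnected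
    isPreconnected_connectedComponent hc mem_connectedComponent

def toPanelQuot : GlueBack S lam → PanelQuot S :=
  Quotient.lift (fun a => (⟦a.1⟧ : PanelQuot S)) fun _ _ hab =>
    EqvGen.apply_eq (r := glueRel S lam) (f := fun a => (⟦a.1⟧ : PanelQuot S))
      (fun _ _ ⟨i, hx, h, _⟩ => Quotient.sound (EqvGen.rel _ _ ⟨i, hx, h⟩)) hab

theorem continuous_toPanelQuot : Continuous (toPanelQuot S lam) :=
  continuous_quotient_mk'.comp continuous_fst |>.quotient_lift _

theorem toPanelQuot_glueAct (g : Z2 m) (q : GlueBack S lam) :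
    toPanelQuot S lam (glueAct S lam g q) = toPanelQuot S lam q :=
  Quotient.inductionOn q fun _ => rfl

variable (p : GlueBack S lam)

theorem mem_connectedComponent_out_iff {x : X} {g : Z2 m} :
    glueMk S lam x g ∈ connectedComponent p ↔
      glueMk S lam x g ∈ connectedComponent (glueMk S lam p.out.1 p.out.2) := by
  conv_lhs => rw [← p.out_eq]

def orbitToPanelQuot : Quotient (compOrbitSetoid S lam p) → PanelQuot S :=
  Quotient.lift (fun q => toPanelQuot S lam q) <| by
    rintro _ _ ⟨g, -, hg⟩
    exact hg ▸ (toPanelQuot_glueAct S lam g _).symm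

variable [PreconnectedSpace X]

noncomputable def sheetToComponent (x : X) : connectedComponent p :=
  ⟨glueMk S lam x p.out.2, (mem_connectedComponent_out_iff S lam p).2
    (glueMk_mem_connectedComponent S lam x p.out.1 p.out.2)⟩

theorem continuous_sheetToComponent : Continuous (sheetToComponent S lam p) :=
  (continuous_glueMk S lam _).subtype_mk _

theorem sheetToComponent_rel {x y : X} (h : panelRel S x y) :
    (compOrbitSetoid S lam p).r (sheetToComponent S lam p x) (sheetToComponent S lam p y) := by
  obtain ⟨i, hx, rfl⟩ := h
  exact ⟨lam i, Submodule.subset_span ⟨i, rfl⟩, glueAct_color_glueMk S lam hx _⟩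

noncomputable def panelQuotToOrbit : PanelQuot S → Quotient (compOrbitSetoid S lam p) :=
  Quotient.lift (fun x => ⟦sheetToComponent S lam p x⟧) fun _ _ =>
    EqvGen.apply_eq fun _ _ h => Quotient.sound (sheetToComponent_rel S lam p h)

theorem panelQuotToOrbit_orbitToPanelQuot (c : Quotient (compOrbitSetoid S lam p)) :
    panelQuotToOrbit S lam p (orbitToPanelQuot S lam p c) = c := by
  induction c using Quotient.inductionOn with
  | _ q =>
    obtain ⟨q, hq⟩ := q
    induction q using Quotient.inductionOn with
    | _ a =>
      show ⟦sheetToComponent S lam p a.1⟧ = _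
      refine Quotient.sound ⟨a.2 - p.out.2, sub_mem_span_of_mem_connectedComponent S lam
        ((mem_connectedComponent_out_iff S lam p).1 hq), ?_⟩
      show glueMk S lam a.1 (a.2 - p.out.2 + p.out.2) = glueMk S lam a.1 a.2
      rw [sub_add_cancel]

noncomputable def orbitHomeomorph : Quotient (compOrbitSetoid S lam p) ≃ₜ PanelQuot S where
  toFun := orbitToPanelQuot S lam p
  invFun := panelQuotToOrbit S lam p
  left_inv := panelQuotToOrbit_orbitToPanelQuot S lam p
  right_inv d := Quotient.inductionOn d fun _ => rfl
  continuous_toFun :=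
    ((continuous_toPanelQuot S lam).comp continuous_subtype_val).quotient_lift _
  continuous_invFun := by
    unfold panelQuotToOrbit
    exact (continuous_quot_mk.comp (continuous_sheetToComponent S lam p)).quotient_lift _

end Glue

/-- If `X` is nonempty and connected and every panel is nonempty, then
every connected component `C` of `M(X, λ)` is invariant under the subgroup `L_λ` generated
by the colors, the orbit space `C/L_λ` is homeomorphic to `X/≈`, and if moreover the panel
structure is perfect then the `L_λ`-action on each connected component is free. -/
theorem glueBack_component_orbitSpace (S : PanelStructure X k) [ConnectedSpace X]
    (hP : ∀ i, (S.P i).Nonempty) (lam : Fin k → Z2 m) :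
    (∀ (p : GlueBack S lam), ∀ g ∈ Submodule.span (ZMod 2) (Set.range lam),
        ∀ q ∈ connectedComponent p, glueAct S lam g q ∈ connectedComponent p) ∧
    (∀ p : GlueBack S lam,
        Nonempty (Quotient (compOrbitSetoid S lam p) ≃ₜ PanelQuot S)) ∧
    (IsPerfect S →
      ∀ (p : GlueBack S lam), ∀ g ∈ Submodule.span (ZMod 2) (Set.range lam),
        ∀ q ∈ connectedComponent p, glueAct S lam g q = q → g = 0) := by
  refine ⟨fun p g hg q hq => ?_, fun p => ⟨orbitHomeomorph S lam p⟩,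
    fun hS _ _ _ _ _ hq => eq_zero_of_glueAct_eq_self S lam hS hq⟩
  rw [connectedComponent_eq hq]
  exact glueAct_mem_connectedComponent S lam hP hg q
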